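/- Let X and Y be jointly Gaussian real random variables, each standard Gaussian (mean 0, variance 1). Then for all natural numbers k and l, E[H_k(X) H_l(Y)] = k! \, \delta_{k,l} \, (E[XY])^k, where \delta_{k,l} is the Kronecker delta. -/

import Mathlib

/-!
The law of `(X, Y)` is determined by the laws of the linear combinations `a X + b Y`
(Cramér–Wold, through characteristic functions), so it is the law of `(Z₁, ρ Z₁ + s Z₂)` for
independent standard Gaussians `Z₁, Z₂`, where `ρ = E[XY]` and `ρ² + s² = 1`. Integrating out
`Z₂` first, Gaussian integration by parts `E[Z p(Z)] = E[p'(Z)]` gives Mehler's identity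
`E[H_l(ρ x + s Z₂)] = ρ^l H_l(x)`, and the claim reduces to the orthogonality relation
`E[H_k(Z) H_l(Z)] = k! δ_{kl}`. The latter follows from the same integration by parts, since
`p ↦ X p - p'`, which raises `H_k` to `H_{k+1}`, is the adjoint of differentiation in `L²`
of the standard Gaussian measure.
-/

open MeasureTheory ProbabilityTheory Polynomial
open scoped NNReal Nat

lemma hasDerivAt_gaussianPDFReal_zero_one (x : ℝ) :
    HasDerivAt (gaussianPDFReal 0 1) (-x * gaussianPDFReal 0 1 x) x := by
  have hexp : HasDerivAt (fun y : ℝ => -y ^ 2 / 2) (-x) x := by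
    have := ((hasDerivAt_id x).fun_pow 2).neg.div_const 2
    simp only [id, Nat.cast_ofNat] at this
    exact this.congr_deriv (by ring)
  have hpdf : gaussianPDFReal 0 1 = fun y => (√(2 * Real.pi))⁻¹ * Real.exp (-y ^ 2 / 2) := by
    ext y; simp [gaussianPDFReal]
  rw [hpdf]
  exact (hexp.exp.const_mul _).congr_deriv (by ring)

lemma integrable_gaussianPDFReal_mul {g : ℝ → ℝ} (hg : Integrable g (gaussianReal 0 1)) :
    Integrable (fun x => gaussianPDFReal 0 1 x * g x) := by
  rw [gaussianReal_of_var_ne_zero _ one_ne_zero,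
    integrable_withDensity_iff_integrable_smul' (measurable_gaussianPDF _ _)
      (ae_of_all _ fun _ => gaussianPDF_lt_top)] at hg
  simpa [toReal_gaussianPDF] using hg

section Semiring

variable {R : Type*} [CommSemiring R] [Algebra R ℝ]

lemma integrable_aeval_gaussianReal (p : R[X]) (μ : ℝ) (v : ℝ≥0) :
    Integrable (fun x => aeval x p) (gaussianReal μ v) := by
  simp_rw [aeval_eq_sum_range, Algebra.smul_def]
  exact integrable_finsetSum _ fun i _ =>
    (integrable_pow_of_mem_interior_integrableExpSet (by simp) i).const_mul _

section Transfer

variable {α : Type*} [MeasurableSpace α] {μ : Measure α}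

lemma memLp_two_aeval_comp_of_map_eq_gaussianReal {f : α → ℝ} {m : ℝ} {v : ℝ≥0}
    (hf : μ.map f = gaussianReal m v) (p : R[X]) :
    MemLp (fun a => aeval (f a) p) 2 μ := by
  have hfm : AEMeasurable f μ := .of_map_ne_zero (hf ▸ IsProbabilityMeasure.ne_zero _)
  refine MemLp.comp_of_map (g := fun x => aeval x p) ?_ hfm
  rw [hf, memLp_two_iff_integrable_sq (by fun_prop)]
  exact (integrable_aeval_gaussianReal (p ^ 2) m v).congr (.of_forall fun x => by simp)

lemma integrable_aeval_comp_mul_aeval_comp_of_map_eq_gaussianReal {f g : α → ℝ} {m₁ m₂ : ℝ}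
    {v₁ v₂ : ℝ≥0} (hf : μ.map f = gaussianReal m₁ v₁) (hg : μ.map g = gaussianReal m₂ v₂)
    (p q : R[X]) :
    Integrable (fun a => aeval (f a) p * aeval (g a) q) μ :=
  (memLp_two_aeval_comp_of_map_eq_gaussianReal hf p).integrable_mul
    (memLp_two_aeval_comp_of_map_eq_gaussianReal hg q)

lemma abs_integral_mul_le_one_of_map_eq_gaussianReal {f g : α → ℝ}
    (hf : μ.map f = gaussianReal 0 1) (hg : μ.map g = gaussianReal 0 1) :
    |∫ a, f a * g a ∂μ| ≤ 1 := by
  have hsq {h : α → ℝ} (hh : μ.map h = gaussianReal 0 1) :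
      Integrable (fun a => h a ^ 2) μ ∧ ∫ a, h a ^ 2 ∂μ = 1 := by
    have hhm : AEMeasurable h μ := .of_map_ne_zero (hh ▸ IsProbabilityMeasure.ne_zero _)
    refine ⟨?_, ?_⟩
    · simpa using (memLp_two_aeval_comp_of_map_eq_gaussianReal hh (X : ℝ[X])).integrable_sq
    · rw [← integral_map (f := fun x : ℝ => x ^ 2) hhm (continuous_pow 2).aestronglyMeasurable,
        hh, ← variance_of_integral_eq_zero aemeasurable_id' integral_id_gaussianReal,
        variance_fun_id_gaussianReal]
      simp
  obtain ⟨hf_int, hf_one⟩ := hsq hf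
  obtain ⟨hg_int, hg_one⟩ := hsq hg
  calc |∫ a, f a * g a ∂μ| ≤ ∫ a, |f a * g a| ∂μ := abs_integral_le_integral_abs
    _ ≤ ∫ a, (f a ^ 2 + g a ^ 2) / 2 ∂μ := by
        refine integral_mono_of_nonneg (.of_forall fun _ => abs_nonneg _)
          ((hf_int.add hg_int).div_const 2) (.of_forall fun a => ?_)
        have := two_mul_le_add_sq |f a| |g a|
        rw [sq_abs, sq_abs] at this
        simp only [abs_mul]
        linarith
    _ = 1 := by rw [integral_div, integral_add hf_int hg_int, hf_one, hg_one]; norm_num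

end Transfer

lemma integral_mul_aeval_gaussianReal (p : R[X]) :
    ∫ x, x * aeval x p ∂gaussianReal 0 1 = ∫ x, aeval x (derivative p) ∂gaussianReal 0 1 := by
  have hint (q : R[X]) : Integrable (fun x => gaussianPDFReal 0 1 x * aeval x q) :=
    integrable_gaussianPDFReal_mul (integrable_aeval_gaussianReal q 0 1)
  have hibp := integral_mul_deriv_eq_deriv_mul_of_integrable
    (u := fun x => aeval x p) (v := gaussianPDFReal 0 1)
    (fun x _ => p.hasDerivAt_aeval x) (fun x _ => hasDerivAt_gaussianPDFReal_zero_one x)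
    ((hint (X * p)).neg.congr (ae_of_all _ fun x => by
      simp only [map_mul, aeval_X, Pi.neg_apply, Pi.mul_apply]; ring))
    ((hint (derivative p)).congr (ae_of_all _ fun _ => mul_comm _ _))
    ((hint p).congr (ae_of_all _ fun _ => mul_comm _ _))
  simp only [integral_gaussianReal_eq_integral_smul one_ne_zero, smul_eq_mul]
  calc ∫ x, gaussianPDFReal 0 1 x * (x * aeval x p)
      = -∫ x, aeval x p * (-x * gaussianPDFReal 0 1 x) := by
        rw [← integral_neg]; congr with x; ring
    _ = ∫ x, gaussianPDFReal 0 1 x * aeval x (derivative p) := by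
        rw [hibp, neg_neg]; congr with x; ring

lemma aeval_add_mul_eq_aeval_comp (p : R[X]) (a s y : ℝ) :
    aeval (a + s * y) p = aeval y ((p.map (algebraMap R ℝ)).comp (C a + C s * X)) := by
  rw [aeval_comp, aeval_map_algebraMap]
  simp

lemma integral_mul_aeval_add_mul_gaussianReal (p : R[X]) (a s : ℝ) :
    ∫ y, y * aeval (a + s * y) p ∂gaussianReal 0 1 =
      s * ∫ y, aeval (a + s * y) (derivative p) ∂gaussianReal 0 1 := by
  simp_rw [aeval_add_mul_eq_aeval_comp, integral_mul_aeval_gaussianReal, ← integral_const_mul]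
  congr with y
  simp [derivative_comp, derivative_map]

end Semiring

section Ring

variable {R : Type*} [CommRing R] [Algebra R ℝ]

lemma integral_aeval_X_mul_sub_derivative_mul_gaussianReal (p q : R[X]) :
    ∫ x, aeval x (X * p - derivative p) * aeval x q ∂gaussianReal 0 1 =
      ∫ x, aeval x p * aeval x (derivative q) ∂gaussianReal 0 1 := by
  have hint (r : R[X]) {f : ℝ → ℝ} (hf : ∀ x, aeval x r = f x) : Integrable f (gaussianReal 0 1) :=
    (integrable_aeval_gaussianReal r 0 1).congr (.of_forall hf)
  calc ∫ x, aeval x (X * p - derivative p) * aeval x q ∂gaussianReal 0 1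
      = ∫ x, (x * aeval x (p * q) - aeval x (derivative (p * q)) +
          aeval x p * aeval x (derivative q)) ∂gaussianReal 0 1 := by
        congr with x; simp only [derivative_mul, map_mul, map_sub, map_add, aeval_X]; ring
    _ = ∫ x, aeval x p * aeval x (derivative q) ∂gaussianReal 0 1 := by
        rw [integral_add, integral_sub, integral_mul_aeval_gaussianReal, sub_self, zero_add]
        · exact hint (X * (p * q)) fun x => by simp
        · exact hint _ fun x => rfl
        · exact hint (X * (p * q) - derivative (p * q)) fun x => by simp
        · exact hint (p * derivative q) fun x => by simp

lemma integral_aeval_add_mul_X_mul_sub_derivative_gaussianReal (p : R[X]) (a s : ℝ) :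
    ∫ y, aeval (a + s * y) (X * p - derivative p) ∂gaussianReal 0 1 =
      a * ∫ y, aeval (a + s * y) p ∂gaussianReal 0 1 +
        (s ^ 2 - 1) * ∫ y, aeval (a + s * y) (derivative p) ∂gaussianReal 0 1 := by
  have hint (q : R[X]) : Integrable (fun y => aeval (a + s * y) q) (gaussianReal 0 1) := by
    simpa only [aeval_add_mul_eq_aeval_comp] using integrable_aeval_gaussianReal _ 0 1
  have hint_mul (q : R[X]) : Integrable (fun y => y * aeval (a + s * y) q) (gaussianReal 0 1) := by
    refine (integrable_aeval_gaussianReal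
      (X * (q.map (algebraMap R ℝ)).comp (C a + C s * X)) 0 1).congr (.of_forall fun y => ?_)
    simp only [aeval_add_mul_eq_aeval_comp, map_mul, aeval_X]
  calc ∫ y, aeval (a + s * y) (X * p - derivative p) ∂gaussianReal 0 1
      = ∫ y, (a * aeval (a + s * y) p + s * (y * aeval (a + s * y) p) -
          aeval (a + s * y) (derivative p)) ∂gaussianReal 0 1 := by
        congr with y; simp only [map_mul, map_sub, aeval_X]; ring
    _ = _ := by
        rw [integral_sub, integral_add, integral_const_mul, integral_const_mul,
          integral_mul_aeval_add_mul_gaussianReal]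
        · ring
        · exact (hint p).const_mul a
        · exact (hint_mul p).const_mul s
        · exact ((hint p).const_mul a).add ((hint_mul p).const_mul s)
        · exact hint _

end Ring

lemma derivative_hermite_succ (n : ℕ) :
    derivative (hermite (n + 1)) = ((n : ℤ[X]) + 1) * hermite n := by
  induction n with
  | zero => simp [hermite_zero]
  | succ n ih =>
    rw [hermite_succ (n + 1), derivative_sub, derivative_mul, derivative_X, ih, derivative_mul,
      hermite_succ n]
    simp only [derivative_add, derivative_natCast, derivative_one]
    push_cast
    ring

lemma integral_aeval_hermite_mul_aeval_hermite_gaussianReal (k l : ℕ) :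
    ∫ x, aeval x (hermite k) * aeval x (hermite l) ∂gaussianReal 0 1 =
      if k = l then (k ! : ℝ) else 0 := by
  induction k generalizing l with
  | zero =>
    cases l with
    | zero => simp [hermite_zero]
    | succ m =>
      simp_rw [mul_comm (aeval _ (hermite 0)), hermite_succ m,
        integral_aeval_X_mul_sub_derivative_mul_gaussianReal]
      simp [hermite_zero]
  | succ k ih =>
    rw [hermite_succ k]
    simp_rw [integral_aeval_X_mul_sub_derivative_mul_gaussianReal]
    cases l with
    | zero => simp [hermite_zero]
    | succ m =>
      simp_rw [derivative_hermite_succ, map_mul, map_add, map_natCast, map_one,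
        mul_left_comm (aeval _ (hermite k))]
      rw [integral_const_mul, ih, Nat.factorial_succ]
      by_cases h : k = m <;> simp [h]

lemma integral_aeval_hermite_mul_add_mul_gaussianReal {ρ s : ℝ} (hρs : ρ ^ 2 + s ^ 2 = 1)
    (x : ℝ) (n : ℕ) :
    ∫ y, aeval (ρ * x + s * y) (hermite n) ∂gaussianReal 0 1 = ρ ^ n * aeval x (hermite n) := by
  induction n using Nat.twoStepInduction with
  | zero => simp [hermite_zero]
  | one =>
    rw [hermite_succ 0, integral_aeval_add_mul_X_mul_sub_derivative_gaussianReal]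
    simp [hermite_zero]
  | more m ih₀ ih₁ =>
    rw [hermite_succ (m + 1), integral_aeval_add_mul_X_mul_sub_derivative_gaussianReal, ih₁,
      derivative_hermite_succ]
    simp only [map_mul, map_sub, map_add, map_natCast, map_one, aeval_X, integral_const_mul, ih₀]
    linear_combination ((m : ℝ) + 1) * ρ ^ m * aeval x (hermite m) * hρs

lemma gaussianReal_prod_map_mul_fst_add_mul_snd (m₁ m₂ : ℝ) (v₁ v₂ : ℝ≥0) (c d : ℝ) :
    ((gaussianReal m₁ v₁).prod (gaussianReal m₂ v₂)).map (fun z => c * z.1 + d * z.2) =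
      gaussianReal (c * m₁ + d * m₂) (⟨c ^ 2, sq_nonneg c⟩ * v₁ + ⟨d ^ 2, sq_nonneg d⟩ * v₂) := by
  have hcomp : (fun z : ℝ × ℝ => c * z.1 + d * z.2) =
      (fun z : ℝ × ℝ => z.1 + z.2) ∘ Prod.map (c * ·) (d * ·) := rfl
  rw [hcomp, ← Measure.map_map (by fun_prop) (by fun_prop),
    ← Measure.map_prod_map _ _ (by fun_prop) (by fun_prop), gaussianReal_map_const_mul,
    gaussianReal_map_const_mul]
  exact gaussianReal_conv_gaussianReal

lemma integral_aeval_hermite_fst_mul_aeval_hermite_prod_gaussianReal {ρ s : ℝ}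
    (hρs : ρ ^ 2 + s ^ 2 = 1) (k l : ℕ) :
    ∫ z, aeval z.1 (hermite k) * aeval (ρ * z.1 + s * z.2) (hermite l)
        ∂(gaussianReal 0 1).prod (gaussianReal 0 1) =
      if k = l then (k ! : ℝ) * ρ ^ k else 0 := by
  have hfst : ((gaussianReal 0 1).prod (gaussianReal 0 1)).map Prod.fst = gaussianReal 0 1 := by
    simp
  rw [integral_prod _ (integrable_aeval_comp_mul_aeval_comp_of_map_eq_gaussianReal hfst
    (gaussianReal_prod_map_mul_fst_add_mul_snd 0 0 1 1 ρ s) _ _)]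
  simp_rw [integral_const_mul, integral_aeval_hermite_mul_add_mul_gaussianReal hρs,
    mul_left_comm _ (ρ ^ l), integral_const_mul,
    integral_aeval_hermite_mul_aeval_hermite_gaussianReal]
  split_ifs with h
  · subst h; ring
  · simp

lemma MeasureTheory.Measure.ext_of_map_strongDual {E : Type*} [NormedAddCommGroup E]
    [NormedSpace ℝ E] [CompleteSpace E] [MeasurableSpace E] [BorelSpace E]
    [SecondCountableTopology E] {μ ν : Measure E} [IsFiniteMeasure μ] [IsFiniteMeasure ν]
    (h : ∀ L : StrongDual ℝ E, μ.map L = ν.map L) : μ = ν :=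
  Measure.ext_of_charFunDual <| funext fun L => by
    rw [charFunDual_eq_charFun_map_one, charFunDual_eq_charFun_map_one, h]

lemma MeasureTheory.Measure.ext_of_map_mul_fst_add_mul_snd {μ ν : Measure (ℝ × ℝ)}
    [IsFiniteMeasure μ] [IsFiniteMeasure ν]
    (h : ∀ a b : ℝ, μ.map (fun z => a * z.1 + b * z.2) = ν.map (fun z => a * z.1 + b * z.2)) :
    μ = ν := by
  refine Measure.ext_of_map_strongDual fun L => ?_
  have hL : ⇑L = fun z => L (1, 0) * z.1 + L (0, 1) * z.2 := by
    ext z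
    calc L z = L (z.1 • ((1 : ℝ), (0 : ℝ)) + z.2 • ((0 : ℝ), (1 : ℝ))) := by
          congr 1; ext <;> simp
      _ = _ := by rw [map_add, map_smul, map_smul, smul_eq_mul, smul_eq_mul]; ring
  rw [hL, h]

lemma map_prodMk_eq_map_prod_gaussianReal {Ω : Type*} [MeasurableSpace Ω] {P : Measure Ω}
    [IsFiniteMeasure P] {X Y : Ω → ℝ} (hX : AEMeasurable X P) (hY : AEMeasurable Y P)
    {ρ s : ℝ} (hρs : ρ ^ 2 + s ^ 2 = 1)
    (hGauss : ∀ a b : ℝ, P.map (fun ω => a * X ω + b * Y ω) =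
      gaussianReal 0 (a ^ 2 + 2 * a * b * ρ + b ^ 2).toNNReal) :
    P.map (fun ω => (X ω, Y ω)) =
      ((gaussianReal 0 1).prod (gaussianReal 0 1)).map (fun z => (z.1, ρ * z.1 + s * z.2)) := by
  refine Measure.ext_of_map_mul_fst_add_mul_snd fun a b => ?_
  rw [AEMeasurable.map_map_of_aemeasurable (by fun_prop) (hX.prodMk hY),
    Measure.map_map (by fun_prop) (by fun_prop)]
  have hcomp : (fun z : ℝ × ℝ => a * z.1 + b * z.2) ∘ (fun z : ℝ × ℝ => (z.1, ρ * z.1 + s * z.2)) =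
      fun z => (a + b * ρ) * z.1 + (b * s) * z.2 := by
    ext z; simp only [Function.comp_apply]; ring
  have hvar : a ^ 2 + 2 * a * b * ρ + b ^ 2 = (a + b * ρ) ^ 2 + (b * s) ^ 2 := by
    linear_combination (-b ^ 2) * hρs
  rw [Function.comp_def, hGauss, hcomp, gaussianReal_prod_map_mul_fst_add_mul_snd, hvar]
  congr 1
  · simp
  · ext
    rw [Real.coe_toNNReal _ (by positivity)]
    change _ = (a + b * ρ) ^ 2 * 1 + (b * s) ^ 2 * 1
    ring

/-- If `X` and `Y` are jointly Gaussian real random variables, each standard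
Gaussian (mean 0, variance 1) — encoded by: every linear combination
`a•X + b•Y` is a centered Gaussian with variance `a² + 2abρ + b²`, where
`ρ = E[XY]` — then `E[H_k(X) H_l(Y)] = k! δ_{k,l} (E[XY])^k`. -/
theorem hermite_orthogonality_gaussian
    {Ω : Type*} [MeasurableSpace Ω] (P : Measure Ω) [IsProbabilityMeasure P]
    (X Y : Ω → ℝ) (hX : Measurable X) (hY : Measurable Y)
    (hGauss : ∀ a b : ℝ,
      Measure.map (fun ω => a * X ω + b * Y ω) P =
        gaussianReal 0
          (Real.toNNReal (a ^ 2 + 2 * a * b * (∫ ω, X ω * Y ω ∂P) + b ^ 2)))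
    (k l : ℕ) :
    ∫ ω, (Polynomial.aeval (X ω) (Polynomial.hermite k) : ℝ) *
        (Polynomial.aeval (Y ω) (Polynomial.hermite l)) ∂P =
      if k = l then (k.factorial : ℝ) * (∫ ω, X ω * Y ω ∂P) ^ k else 0 := by
  set ρ := ∫ ω, X ω * Y ω ∂P
  have hρ : |ρ| ≤ 1 :=
    abs_integral_mul_le_one_of_map_eq_gaussianReal (by simpa using hGauss 1 0)
      (by simpa using hGauss 0 1)
  set s := √(1 - ρ ^ 2)
  have hρs : ρ ^ 2 + s ^ 2 = 1 := by
    rw [Real.sq_sqrt (by nlinarith [abs_le.mp hρ])]; ring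
  calc ∫ ω, aeval (X ω) (hermite k) * aeval (Y ω) (hermite l) ∂P
      = ∫ z, aeval z.1 (hermite k) * aeval z.2 (hermite l) ∂P.map (fun ω => (X ω, Y ω)) :=
        (integral_map (hX.prodMk hY).aemeasurable
          (f := fun z : ℝ × ℝ => aeval z.1 (hermite k) * aeval z.2 (hermite l))
          (by fun_prop)).symm
    _ = ∫ z, aeval z.1 (hermite k) * aeval (ρ * z.1 + s * z.2) (hermite l)
          ∂(gaussianReal 0 1).prod (gaussianReal 0 1) := by
        rw [map_prodMk_eq_map_prod_gaussianReal hX.aemeasurable hY.aemeasurable hρs hGauss,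
          integral_map (by fun_prop) (by fun_prop)]
    _ = _ := integral_aeval_hermite_fst_mul_aeval_hermite_prod_gaussianReal hρs k l
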